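/- arXiv:1610.01051 — 2 statements merged into one kernel-verified Lean document; each statement's English description precedes it below -/
import Mathlib

section
/- Let (U_k^(1), V_k^(1), E_k) and (U_k^(2), V_k^(2), E_k), k=1,…,p, be two proper weak regular multisplittings of a nonnegative semimonotone matrix A ∈ ℝ^{m×n} with R(E_k) ⊆ R(Aᵀ) for each k. If V_k^(2) ≥ V_k^(1) for each k, then ρ(H₁) ≤ ρ(H₂) < 1, where H_i = Σ_{k=1}^p E_k [U_k^(i)]† V_k^(i). -/
open Matrix Polynomial

/-- `X` is the Moore-Penrose inverse of `A`. -/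
def IsMP {m n : ℕ} (A : Matrix (Fin m) (Fin n) ℝ) (X : Matrix (Fin n) (Fin m) ℝ) : Prop :=
  A * X * A = A ∧ X * A * X = X ∧ (A * X)ᵀ = A * X ∧ (X * A)ᵀ = X * A

/-- `A = U - V` is a proper splitting: `R(U)=R(A)` and `N(U)=N(A)`. -/
def ProperSplitting {m n : ℕ} (A U V : Matrix (Fin m) (Fin n) ℝ) : Prop :=
  A = U - V ∧ LinearMap.range U.mulVecLin = LinearMap.range A.mulVecLin ∧
    LinearMap.ker U.mulVecLin = LinearMap.ker A.mulVecLin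

/-- `μ : ℂ` is an eigenvalue of the real matrix `M`. -/
def IsEigen {n : ℕ} (M : Matrix (Fin n) (Fin n) ℝ) (μ : ℂ) : Prop :=
  ((M.map (algebraMap ℝ ℂ)).charpoly).IsRoot μ

/-- The spectral radius of a real square matrix. -/
noncomputable def specRad {n : ℕ} (M : Matrix (Fin n) (Fin n) ℝ) : ℝ :=
  sSup {r : ℝ | ∃ μ : ℂ, IsEigen M μ ∧ r = ‖μ‖}

/-- Entrywise nonnegativity. -/
def EntryNonneg {m n : ℕ} (A : Matrix (Fin m) (Fin n) ℝ) : Prop := ∀ i j, 0 ≤ A i j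

/-- Entrywise order. -/
def EntryLE {m n : ℕ} (A B : Matrix (Fin m) (Fin n) ℝ) : Prop := ∀ i j, A i j ≤ B i j

/-- Entrywise strict order. -/
def EntryLT {m n : ℕ} (A B : Matrix (Fin m) (Fin n) ℝ) : Prop := ∀ i j, A i j < B i j

/-!
Since `∑ E_k = I` and `R(E_k) ⊆ R(Aᵀ)`, the matrix `A` has full column rank, so `A†A = I`,
`U_k†U_k = I`, and `U_k U_k† = AA†` (orthogonal projections onto `R(U_k) = R(A)`). Hence
`H = I - (∑ E_k U_k†) A`, and `U₁† = U₂† + U₁†(V₂ - V₁)U₂† ≥ U₂†` gives `0 ≤ H₁ ≤ H₂` entrywise.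
The Gelfand formula for the ℓ∞ operator norm, which is monotone on nonnegative matrices, turns
this into `ρ(H₁) ≤ ρ(H₂)`. Finally the positive vector `x = A†𝟙` satisfies
`H₂ x = x - (∑ E_k U_k†) 𝟙 < x`, and a nonnegative matrix that strictly shrinks a positive vector
has all its eigenvalues inside the unit disc.
-/

open scoped ENNReal

namespace EntryNonneg

variable {l m n : ℕ}

lemma mul {A : Matrix (Fin l) (Fin m) ℝ} {B : Matrix (Fin m) (Fin n) ℝ}
    (hA : EntryNonneg A) (hB : EntryNonneg B) : EntryNonneg (A * B) := fun i j => by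
  rw [Matrix.mul_apply]
  exact Finset.sum_nonneg fun k _ => mul_nonneg (hA i k) (hB k j)

lemma pow {A : Matrix (Fin n) (Fin n) ℝ} (hA : EntryNonneg A) : ∀ k : ℕ, EntryNonneg (A ^ k)
  | 0 => fun i j => by rw [pow_zero, Matrix.one_apply]; split_ifs <;> norm_num
  | k + 1 => by rw [pow_succ]; exact (hA.pow k).mul hA

lemma sum {p : ℕ} {A : Fin p → Matrix (Fin m) (Fin n) ℝ} (hA : ∀ k, EntryNonneg (A k)) :
    EntryNonneg (∑ k, A k) := fun i j => by
  rw [Matrix.sum_apply]; exact Finset.sum_nonneg fun k _ => hA k i j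

end EntryNonneg

namespace EntryLE

variable {l m n : ℕ}

lemma mul {A B : Matrix (Fin l) (Fin m) ℝ} {C D : Matrix (Fin m) (Fin n) ℝ}
    (hA : EntryNonneg A) (hAB : EntryLE A B) (hC : EntryNonneg C) (hCD : EntryLE C D) :
    EntryLE (A * C) (B * D) := fun i j => by
  simp only [Matrix.mul_apply]
  exact Finset.sum_le_sum fun k _ =>
    mul_le_mul (hAB i k) (hCD k j) (hC k j) ((hA i k).trans (hAB i k))

lemma pow {A B : Matrix (Fin n) (Fin n) ℝ} (hA : EntryNonneg A) (hAB : EntryLE A B) :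
    ∀ k : ℕ, EntryLE (A ^ k) (B ^ k)
  | 0 => fun _ _ => le_rfl
  | k + 1 => by rw [pow_succ, pow_succ]; exact mul (hA.pow k) (pow hA hAB k) hA hAB

lemma sum {p : ℕ} {A B : Fin p → Matrix (Fin m) (Fin n) ℝ} (h : ∀ k, EntryLE (A k) (B k)) :
    EntryLE (∑ k, A k) (∑ k, B k) := fun i j => by
  simp only [Matrix.sum_apply]; exact Finset.sum_le_sum fun k _ => h k i j

end EntryLE

section SpectralRadius

variable {n : ℕ}

lemma isEigen_iff_mem_spectrum {M : Matrix (Fin n) (Fin n) ℝ} {μ : ℂ} :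
    IsEigen M μ ↔ μ ∈ spectrum ℂ (M.map (algebraMap ℝ ℂ)) :=
  Matrix.mem_spectrum_iff_isRoot_charpoly.symm

lemma IsEigen.exists_mulVec_eq_smul {M : Matrix (Fin n) (Fin n) ℝ} {μ : ℂ} (hμ : IsEigen M μ) :
    ∃ v ≠ 0, M.map (algebraMap ℝ ℂ) *ᵥ v = μ • v := by
  rw [isEigen_iff_mem_spectrum, ← Matrix.spectrum_toLin',
    ← Module.End.hasEigenvalue_iff_mem_spectrum] at hμ
  obtain ⟨v, hv⟩ := hμ.exists_hasEigenvector
  exact ⟨v, hv.2, by simpa using Module.End.mem_eigenspace_iff.1 hv.1⟩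

lemma finite_setOf_isEigen_norm (M : Matrix (Fin n) (Fin n) ℝ) :
    {r : ℝ | ∃ μ : ℂ, IsEigen M μ ∧ r = ‖μ‖}.Finite :=
  ((Matrix.finite_spectrum _).image (‖·‖)).subset <| by
    rintro _ ⟨μ, hμ, rfl⟩
    exact ⟨μ, isEigen_iff_mem_spectrum.1 hμ, rfl⟩

lemma norm_le_specRad {M : Matrix (Fin n) (Fin n) ℝ} {μ : ℂ} (hμ : IsEigen M μ) :
    ‖μ‖ ≤ specRad M :=
  le_csSup (finite_setOf_isEigen_norm M).bddAbove ⟨μ, hμ, rfl⟩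

lemma specRad_nonneg (M : Matrix (Fin n) (Fin n) ℝ) : 0 ≤ specRad M :=
  Real.sSup_nonneg <| by rintro _ ⟨μ, -, rfl⟩; exact norm_nonneg μ

lemma specRad_lt_of_forall_norm_lt {M : Matrix (Fin n) (Fin n) ℝ} {r : ℝ} (hr : 0 < r)
    (h : ∀ μ, IsEigen M μ → ‖μ‖ < r) : specRad M < r := by
  rcases {r : ℝ | ∃ μ : ℂ, IsEigen M μ ∧ r = ‖μ‖}.eq_empty_or_nonempty with he | hne
  · rwa [specRad, he, Real.sSup_empty]
  · exact ((finite_setOf_isEigen_norm M).csSup_lt_iff hne).2 <| by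
      rintro _ ⟨μ, hμ, rfl⟩
      exact h μ hμ

lemma spectralRadius_map_le_specRad (M : Matrix (Fin n) (Fin n) ℝ) :
    spectralRadius ℂ (M.map (algebraMap ℝ ℂ)) ≤ ENNReal.ofReal (specRad M) :=
  iSup₂_le fun μ hμ => by
    rw [← enorm_eq_nnnorm, ← ofReal_norm]
    exact ENNReal.ofReal_le_ofReal (norm_le_specRad (isEigen_iff_mem_spectrum.2 hμ))

lemma specRad_le_of_spectralRadius_map_le {M : Matrix (Fin n) (Fin n) ℝ} {r : ℝ} (hr : 0 ≤ r)
    (h : spectralRadius ℂ (M.map (algebraMap ℝ ℂ)) ≤ ENNReal.ofReal r) : specRad M ≤ r := by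
  refine Real.sSup_le ?_ hr
  rintro _ ⟨μ, hμ, rfl⟩
  rw [← ENNReal.ofReal_le_ofReal_iff hr, ofReal_norm, enorm_eq_nnnorm]
  exact (le_iSup₂ (f := fun μ _ => (‖μ‖₊ : ℝ≥0∞)) μ (isEigen_iff_mem_spectrum.1 hμ)).trans h

end SpectralRadius

section GelfandFormula

attribute [local instance] Matrix.linftyOpNormedRing Matrix.linftyOpNormedAlgebra

variable {n : ℕ}

lemma nnnorm_map_le_of_entryLE {M N : Matrix (Fin n) (Fin n) ℝ} (hM : EntryNonneg M)
    (hMN : EntryLE M N) : ‖M.map (algebraMap ℝ ℂ)‖₊ ≤ ‖N.map (algebraMap ℝ ℂ)‖₊ := by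
  simp only [Matrix.linfty_opNNNorm_def, Matrix.map_apply]
  gcongr with i _ j
  rw [← NNReal.coe_le_coe, coe_nnnorm, coe_nnnorm, Complex.coe_algebraMap, Complex.norm_real,
    Complex.norm_real, Real.norm_of_nonneg (hM i j), Real.norm_of_nonneg ((hM i j).trans (hMN i j))]
  exact hMN i j

lemma spectralRadius_map_mono {M N : Matrix (Fin n) (Fin n) ℝ} (hM : EntryNonneg M)
    (hMN : EntryLE M N) :
    spectralRadius ℂ (M.map (algebraMap ℝ ℂ)) ≤ spectralRadius ℂ (N.map (algebraMap ℝ ℂ)) := by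
  refine le_of_tendsto_of_tendsto' (spectrum.pow_nnnorm_pow_one_div_tendsto_nhds_spectralRadius _)
    (spectrum.pow_nnnorm_pow_one_div_tendsto_nhds_spectralRadius _) fun k => ?_
  rw [← Matrix.map_pow, ← Matrix.map_pow]
  gcongr
  exact nnnorm_map_le_of_entryLE (hM.pow k) (hMN.pow hM k)

end GelfandFormula

lemma specRad_mono {n : ℕ} {M N : Matrix (Fin n) (Fin n) ℝ} (hM : EntryNonneg M)
    (hMN : EntryLE M N) : specRad M ≤ specRad N :=
  specRad_le_of_spectralRadius_map_le (specRad_nonneg N)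
    ((spectralRadius_map_mono hM hMN).trans (spectralRadius_map_le_specRad N))

lemma IsEigen.exists_norm_mul_le_mulVec {n : ℕ} {M : Matrix (Fin n) (Fin n) ℝ}
    (hM : EntryNonneg M) {μ : ℂ} (hμ : IsEigen M μ) {x : Fin n → ℝ} (hx : ∀ i, 0 < x i) :
    ∃ i, ‖μ‖ * x i ≤ (M *ᵥ x) i := by
  obtain ⟨v, hv, hMv⟩ := hμ.exists_mulVec_eq_smul
  obtain ⟨j, hj⟩ := Function.ne_iff.mp hv
  obtain ⟨i, -, hi⟩ :=
    Finset.univ.exists_max_image (fun l => ‖v l‖ / x l) ⟨j, Finset.mem_univ j⟩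
  set t := ‖v i‖ / x i
  have ht : 0 < t := (div_pos (norm_pos_iff.2 hj) (hx j)).trans_le (hi j (Finset.mem_univ j))
  have hvt : ∀ l, ‖v l‖ ≤ t * x l := fun l => (div_le_iff₀ (hx l)).1 (hi l (Finset.mem_univ l))
  refine ⟨i, le_of_mul_le_mul_left ?_ ht⟩
  calc t * (‖μ‖ * x i) = ‖(μ • v) i‖ := by
        rw [Pi.smul_apply, smul_eq_mul, norm_mul, ← mul_assoc, mul_comm t, mul_assoc,
          div_mul_cancel₀ _ (hx i).ne']
    _ = ‖∑ l, (M i l : ℂ) * v l‖ := by rw [← hMv]; rfl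
    _ ≤ ∑ l, M i l * (t * x l) := by
        refine (norm_sum_le _ _).trans (Finset.sum_le_sum fun l _ => ?_)
        rw [norm_mul, Complex.norm_real, Real.norm_of_nonneg (hM i l)]
        exact mul_le_mul_of_nonneg_left (hvt l) (hM i l)
    _ = t * (M *ᵥ x) i := by
        simp only [Matrix.mulVec, dotProduct, Finset.mul_sum]
        exact Finset.sum_congr rfl fun l _ => by ring

lemma specRad_lt_one_of_mulVec_lt {n : ℕ} {M : Matrix (Fin n) (Fin n) ℝ} (hM : EntryNonneg M)
    {x : Fin n → ℝ} (hx : ∀ i, 0 < x i) (hMx : ∀ i, (M *ᵥ x) i < x i) : specRad M < 1 :=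
  specRad_lt_of_forall_norm_lt one_pos fun _ hμ => by
    obtain ⟨i, hi⟩ := hμ.exists_norm_mul_le_mulVec hM hx
    exact (mul_lt_iff_lt_one_left (hx i)).1 (hi.trans_lt (hMx i))

section MoorePenrose

variable {l m n : ℕ}

lemma range_eq_top_of_sum_eq_one {p : ℕ} {E : Fin p → Matrix (Fin n) (Fin n) ℝ}
    {S : Submodule ℝ (Fin n → ℝ)} (hE : ∀ k, LinearMap.range (E k).mulVecLin ≤ S)
    (hEsum : ∑ k, E k = 1) : S = ⊤ :=
  Submodule.eq_top_iff'.2 fun v => by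
    rw [← Matrix.one_mulVec v, ← hEsum, Matrix.sum_mulVec]
    exact Submodule.sum_mem _ fun k _ => hE k ⟨v, rfl⟩

lemma ker_mulVecLin_eq_bot_of_range_transpose_eq_top {A : Matrix (Fin m) (Fin n) ℝ}
    (h : LinearMap.range Aᵀ.mulVecLin = ⊤) : LinearMap.ker A.mulVecLin = ⊥ := by
  refine LinearMap.ker_eq_bot'.2 fun v hv => ?_
  obtain ⟨w, rfl⟩ : v ∈ LinearMap.range Aᵀ.mulVecLin := h ▸ Submodule.mem_top
  simp only [Matrix.mulVecLin_apply] at hv ⊢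
  have hdot : (Aᵀ *ᵥ w) ⬝ᵥ (Aᵀ *ᵥ w) = w ⬝ᵥ A *ᵥ (Aᵀ *ᵥ w) := by
    rw [Matrix.dotProduct_mulVec w, Matrix.mulVec_transpose]
  exact dotProduct_self_eq_zero.1 (by rw [hdot, hv, dotProduct_zero])

lemma IsMP.mul_eq_one_of_ker_eq_bot {A : Matrix (Fin m) (Fin n) ℝ} {X : Matrix (Fin n) (Fin m) ℝ}
    (hA : IsMP A X) (h : LinearMap.ker A.mulVecLin = ⊥) : X * A = 1 :=
  Matrix.ext_iff_mulVec.2 fun v => LinearMap.ker_eq_bot.1 h <| by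
    simp only [Matrix.mulVecLin_apply, Matrix.mulVec_mulVec, ← Matrix.mul_assoc, hA.1,
      Matrix.mul_one]

lemma mul_mul_eq_of_range_le {A : Matrix (Fin m) (Fin n) ℝ} {X : Matrix (Fin n) (Fin m) ℝ}
    {B : Matrix (Fin m) (Fin l) ℝ} (hA : A * X * A = A)
    (h : LinearMap.range B.mulVecLin ≤ LinearMap.range A.mulVecLin) : A * X * B = B :=
  Matrix.ext_iff_mulVec.2 fun v => by
    obtain ⟨w, hw⟩ := h ⟨v, rfl⟩
    rw [← Matrix.mulVec_mulVec, ← Matrix.mulVecLin_apply B, ← hw, Matrix.mulVecLin_apply,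
      Matrix.mulVec_mulVec, hA]

-- Both products are orthogonal projections onto the same subspace.
lemma IsMP.mul_eq_of_range_eq {A : Matrix (Fin m) (Fin n) ℝ} {X : Matrix (Fin n) (Fin m) ℝ}
    {B : Matrix (Fin m) (Fin l) ℝ} {Y : Matrix (Fin l) (Fin m) ℝ} (hA : IsMP A X) (hB : IsMP B Y)
    (h : LinearMap.range A.mulVecLin = LinearMap.range B.mulVecLin) : A * X = B * Y := by
  have hBA : B * Y * (A * X) = A * X := by
    rw [← Matrix.mul_assoc, mul_mul_eq_of_range_le hB.1 h.le]
  have hAB : A * X * (B * Y) = B * Y := by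
    rw [← Matrix.mul_assoc, mul_mul_eq_of_range_le hA.1 h.ge]
  calc A * X = (B * Y * (A * X))ᵀ := by rw [hBA, hA.2.2.1]
    _ = A * X * (B * Y) := by rw [Matrix.transpose_mul, hA.2.2.1, hB.2.2.1]
    _ = B * Y := hAB

lemma IsMP.entryLE_of_entryLE {U₁ U₂ : Matrix (Fin m) (Fin n) ℝ}
    {X₁ X₂ : Matrix (Fin n) (Fin m) ℝ} (h₁ : IsMP U₁ X₁) (hX₁U₁ : X₁ * U₁ = 1)
    (hP : U₁ * X₁ = U₂ * X₂) (hX₁ : EntryNonneg X₁) (hX₂ : EntryNonneg X₂)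
    (hU : EntryLE U₁ U₂) : EntryLE X₂ X₁ := by
  have key : X₁ = X₂ + X₁ * (U₂ - U₁) * X₂ := calc
    X₁ = X₁ * (U₂ * X₂) := by rw [← hP, ← Matrix.mul_assoc, h₁.2.1]
    _ = X₂ + X₁ * (U₂ - U₁) * X₂ := by
      rw [Matrix.mul_sub, Matrix.sub_mul, hX₁U₁, Matrix.one_mul, Matrix.mul_assoc]
      abel
  intro i j
  rw [key, Matrix.add_apply]
  exact le_add_of_nonneg_right ((hX₁.mul fun i j => sub_nonneg.2 (hU i j)).mul hX₂ i j)

lemma mulVec_one_pos_of_mul_eq_one {X : Matrix (Fin n) (Fin m) ℝ} {U : Matrix (Fin m) (Fin n) ℝ}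
    (hX : EntryNonneg X) (hXU : X * U = 1) (i : Fin n) : 0 < (X *ᵥ 1) i := by
  have hrow : ∑ l, X i l * U l i ≠ 0 := by
    rw [← Matrix.mul_apply, hXU, Matrix.one_apply_eq]
    exact one_ne_zero
  obtain ⟨l, -, hl⟩ := Finset.exists_ne_zero_of_sum_ne_zero hrow
  simp only [Matrix.mulVec, dotProduct, Pi.one_apply, mul_one]
  exact Finset.sum_pos' (fun j _ => hX i j)
    ⟨l, Finset.mem_univ l, (hX i l).lt_of_ne' (left_ne_zero_of_mul hl)⟩

end MoorePenrose

namespace ProperSplitting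

variable {m n : ℕ} {A U V : Matrix (Fin m) (Fin n) ℝ} {X : Matrix (Fin n) (Fin m) ℝ}

lemma pinv_mul_eq_one (hs : ProperSplitting A U V) (hX : IsMP U X)
    (hA : LinearMap.ker A.mulVecLin = ⊥) : X * U = 1 :=
  hX.mul_eq_one_of_ker_eq_bot (hs.2.2.trans hA)

lemma mul_pinv_eq {Ad : Matrix (Fin n) (Fin m) ℝ} (hs : ProperSplitting A U V) (hX : IsMP U X)
    (hA : IsMP A Ad) : U * X = A * Ad :=
  hX.mul_eq_of_range_eq hA hs.2.1

end ProperSplitting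

section Multisplitting

variable {m n p : ℕ} {A : Matrix (Fin m) (Fin n) ℝ} {Ad : Matrix (Fin n) (Fin m) ℝ}
  {E : Fin p → Matrix (Fin n) (Fin n) ℝ}

lemma sum_mulVec_pos (hE0 : ∀ k, EntryNonneg (E k)) (hEsum : ∑ k, E k = 1)
    {y : Fin p → Fin n → ℝ} (hy : ∀ k i, 0 < y k i) (i : Fin n) : 0 < ∑ k, (E k *ᵥ y k) i := by
  have hdiag : ∑ k, E k i i ≠ 0 := by
    rw [← Matrix.sum_apply, hEsum, Matrix.one_apply_eq]
    exact one_ne_zero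
  obtain ⟨k, -, hk⟩ := Finset.exists_ne_zero_of_sum_ne_zero hdiag
  have hterm : ∀ k, E k i i * y k i ≤ (E k *ᵥ y k) i := fun k =>
    Finset.single_le_sum (f := fun l => E k i l * y k l)
      (fun l _ => mul_nonneg (hE0 k i l) (hy k l).le) (Finset.mem_univ i)
  exact (Finset.sum_pos' (fun k _ => mul_nonneg (hE0 k i i) (hy k i).le)
    ⟨k, Finset.mem_univ k, mul_pos ((hE0 k i i).lt_of_ne' hk) (hy k i)⟩).trans_le
    (Finset.sum_le_sum fun k _ => hterm k)

lemma sum_mul_pinv_mul_eq_one_sub {U V : Fin p → Matrix (Fin m) (Fin n) ℝ}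
    {X : Fin p → Matrix (Fin n) (Fin m) ℝ} (hps : ∀ k, ProperSplitting A (U k) (V k))
    (hXU : ∀ k, X k * U k = 1) (hEsum : ∑ k, E k = 1) :
    ∑ k, E k * X k * V k = 1 - (∑ k, E k * X k) * A := by
  have hterm : ∀ k, E k * X k * V k = E k - E k * X k * A := fun k => by
    rw [show V k = U k - A by rw [(hps k).1]; abel, Matrix.mul_sub, Matrix.mul_assoc, hXU k,
      Matrix.mul_one]
  rw [Finset.sum_congr rfl fun k _ => hterm k, Finset.sum_sub_distrib, hEsum, Matrix.sum_mul]

theorem specRad_sum_mul_pinv_mul_lt_one {U V : Fin p → Matrix (Fin m) (Fin n) ℝ}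
    {X : Fin p → Matrix (Fin n) (Fin m) ℝ} (hA : IsMP A Ad) (hsemi : EntryNonneg Ad)
    (hker : LinearMap.ker A.mulVecLin = ⊥) (hps : ∀ k, ProperSplitting A (U k) (V k))
    (hU : ∀ k, IsMP (U k) (X k)) (hE0 : ∀ k, EntryNonneg (E k)) (hEsum : ∑ k, E k = 1)
    (hX : ∀ k, EntryNonneg (X k)) (hXV : ∀ k, EntryNonneg (X k * V k)) :
    specRad (∑ k, E k * X k * V k) < 1 := by
  have hXU : ∀ k, X k * U k = 1 := fun k => (hps k).pinv_mul_eq_one (hU k) hker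
  set G := ∑ k, E k * X k
  have hGP : G * (A * Ad) = G := by
    simp only [G, Matrix.sum_mul]
    refine Finset.sum_congr rfl fun k _ => ?_
    rw [← (hps k).mul_pinv_eq (hU k) hA, Matrix.mul_assoc, ← Matrix.mul_assoc (X k), (hU k).2.1]
  have hG : ∀ i, 0 < (G *ᵥ 1) i := fun i => by
    simp only [G, Matrix.sum_mulVec, Finset.sum_apply, ← Matrix.mulVec_mulVec]
    exact sum_mulVec_pos hE0 hEsum (fun k => mulVec_one_pos_of_mul_eq_one (hX k) (hXU k)) i
  have hHx : (1 - G * A) *ᵥ (Ad *ᵥ 1) = Ad *ᵥ 1 - G *ᵥ 1 := by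
    rw [Matrix.mulVec_mulVec, Matrix.sub_mul, Matrix.one_mul, Matrix.mul_assoc, hGP,
      Matrix.sub_mulVec]
  have hH : EntryNonneg (∑ k, E k * X k * V k) :=
    EntryNonneg.sum fun k => by rw [Matrix.mul_assoc]; exact (hE0 k).mul (hXV k)
  rw [sum_mul_pinv_mul_eq_one_sub hps hXU hEsum] at hH ⊢
  refine specRad_lt_one_of_mulVec_lt hH
    (mulVec_one_pos_of_mul_eq_one hsemi (hA.mul_eq_one_of_ker_eq_bot hker)) fun i => ?_
  rw [hHx, Pi.sub_apply]
  exact sub_lt_self _ (hG i)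

theorem specRad_sum_mul_pinv_mul_le_of_entryLE {U₁ V₁ U₂ V₂ : Fin p → Matrix (Fin m) (Fin n) ℝ}
    {X₁ X₂ : Fin p → Matrix (Fin n) (Fin m) ℝ} (hA : IsMP A Ad) (hAnn : EntryNonneg A)
    (hker : LinearMap.ker A.mulVecLin = ⊥)
    (hps₁ : ∀ k, ProperSplitting A (U₁ k) (V₁ k)) (hU₁ : ∀ k, IsMP (U₁ k) (X₁ k))
    (hps₂ : ∀ k, ProperSplitting A (U₂ k) (V₂ k)) (hU₂ : ∀ k, IsMP (U₂ k) (X₂ k))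
    (hE0 : ∀ k, EntryNonneg (E k)) (hEsum : ∑ k, E k = 1)
    (hX₁ : ∀ k, EntryNonneg (X₁ k)) (hX₁V₁ : ∀ k, EntryNonneg (X₁ k * V₁ k))
    (hX₂ : ∀ k, EntryNonneg (X₂ k)) (hV : ∀ k, EntryLE (V₁ k) (V₂ k)) :
    specRad (∑ k, E k * X₁ k * V₁ k) ≤ specRad (∑ k, E k * X₂ k * V₂ k) := by
  have hXU₁ : ∀ k, X₁ k * U₁ k = 1 := fun k => (hps₁ k).pinv_mul_eq_one (hU₁ k) hker
  have hXU₂ : ∀ k, X₂ k * U₂ k = 1 := fun k => (hps₂ k).pinv_mul_eq_one (hU₂ k) hker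
  have hUle : ∀ k, EntryLE (U₁ k) (U₂ k) := fun k i j => by
    have h₁ := congrFun₂ (hps₁ k).1 i j
    have h₂ := congrFun₂ (hps₂ k).1 i j
    simp only [Matrix.sub_apply] at h₁ h₂
    linarith [hV k i j]
  have hXle : ∀ k, EntryLE (X₂ k) (X₁ k) := fun k =>
    (hU₁ k).entryLE_of_entryLE (hXU₁ k)
      (((hps₁ k).mul_pinv_eq (hU₁ k) hA).trans ((hps₂ k).mul_pinv_eq (hU₂ k) hA).symm)
      (hX₁ k) (hX₂ k) (hUle k)
  have hGle : EntryLE (∑ k, E k * X₂ k) (∑ k, E k * X₁ k) :=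
    EntryLE.sum fun k => EntryLE.mul (hE0 k) (fun _ _ => le_rfl) (hX₂ k) (hXle k)
  have hG₂ : EntryNonneg (∑ k, E k * X₂ k) := EntryNonneg.sum fun k => (hE0 k).mul (hX₂ k)
  have hH₁ : EntryNonneg (∑ k, E k * X₁ k * V₁ k) :=
    EntryNonneg.sum fun k => by rw [Matrix.mul_assoc]; exact (hE0 k).mul (hX₁V₁ k)
  refine specRad_mono hH₁ ?_
  rw [sum_mul_pinv_mul_eq_one_sub hps₁ hXU₁ hEsum, sum_mul_pinv_mul_eq_one_sub hps₂ hXU₂ hEsum]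
  intro i j
  rw [Matrix.sub_apply, Matrix.sub_apply]
  exact sub_le_sub_left (EntryLE.mul hG₂ hGle hAnn (fun _ _ => le_rfl) i j) _

end Multisplitting

theorem stmt17_general {m n p : ℕ} (A : Matrix (Fin m) (Fin n) ℝ)
    (U₁ V₁ U₂ V₂ : Fin p → Matrix (Fin m) (Fin n) ℝ)
    (U₁d U₂d : Fin p → Matrix (Fin n) (Fin m) ℝ)
    (E : Fin p → Matrix (Fin n) (Fin n) ℝ)
    (Ad : Matrix (Fin n) (Fin m) ℝ) (hA : IsMP A Ad) (hsemi : EntryNonneg Ad)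
    (hAnn : EntryNonneg A)
    (hps1 : ∀ k, ProperSplitting A (U₁ k) (V₁ k)) (hU1 : ∀ k, IsMP (U₁ k) (U₁d k))
    (hps2 : ∀ k, ProperSplitting A (U₂ k) (V₂ k)) (hU2 : ∀ k, IsMP (U₂ k) (U₂d k))
    (hE0 : ∀ k, EntryNonneg (E k))
    (hEsum : ∑ k, E k = 1)
    (hU1d : ∀ k, EntryNonneg (U₁d k)) (hU1dV : ∀ k, EntryNonneg (U₁d k * V₁ k))
    (hU2d : ∀ k, EntryNonneg (U₂d k)) (hU2dV : ∀ k, EntryNonneg (U₂d k * V₂ k))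
    (hrange : ∀ k, LinearMap.range (E k).mulVecLin ≤ LinearMap.range (Aᵀ).mulVecLin)
    (hVle : ∀ k, EntryLE (V₁ k) (V₂ k)) :
    specRad (∑ k, E k * U₁d k * V₁ k) ≤ specRad (∑ k, E k * U₂d k * V₂ k) ∧
    specRad (∑ k, E k * U₂d k * V₂ k) < 1 := by
  have hker : LinearMap.ker A.mulVecLin = ⊥ :=
    ker_mulVecLin_eq_bot_of_range_transpose_eq_top (range_eq_top_of_sum_eq_one hrange hEsum)
  exact ⟨specRad_sum_mul_pinv_mul_le_of_entryLE hA hAnn hker hps1 hU1 hps2 hU2 hE0 hEsum hU1d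
      hU1dV hU2d hVle,
    specRad_sum_mul_pinv_mul_lt_one hA hsemi hker hps2 hU2 hE0 hEsum hU2d hU2dV⟩

theorem stmt17 {m n p : ℕ} (A : Matrix (Fin m) (Fin n) ℝ)
    (U₁ V₁ U₂ V₂ : Fin p → Matrix (Fin m) (Fin n) ℝ)
    (U₁d U₂d : Fin p → Matrix (Fin n) (Fin m) ℝ)
    (E : Fin p → Matrix (Fin n) (Fin n) ℝ)
    (Ad : Matrix (Fin n) (Fin m) ℝ) (hA : IsMP A Ad) (hsemi : EntryNonneg Ad)
    (hAnn : EntryNonneg A)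
    (hps1 : ∀ k, ProperSplitting A (U₁ k) (V₁ k)) (hU1 : ∀ k, IsMP (U₁ k) (U₁d k))
    (hps2 : ∀ k, ProperSplitting A (U₂ k) (V₂ k)) (hU2 : ∀ k, IsMP (U₂ k) (U₂d k))
    (hE0 : ∀ k, EntryNonneg (E k)) (hEdiag : ∀ k, ∀ i j, i ≠ j → E k i j = 0)
    (hEsum : ∑ k, E k = 1)
    (hU1d : ∀ k, EntryNonneg (U₁d k)) (hU1dV : ∀ k, EntryNonneg (U₁d k * V₁ k))
    (hU2d : ∀ k, EntryNonneg (U₂d k)) (hU2dV : ∀ k, EntryNonneg (U₂d k * V₂ k))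
    (hrange : ∀ k, LinearMap.range (E k).mulVecLin ≤ LinearMap.range (Aᵀ).mulVecLin)
    (hVle : ∀ k, EntryLE (V₁ k) (V₂ k)) :
    specRad (∑ k, E k * U₁d k * V₁ k) ≤ specRad (∑ k, E k * U₂d k * V₂ k) ∧
    specRad (∑ k, E k * U₂d k * V₂ k) < 1 :=
  stmt17_general A U₁ V₁ U₂ V₂ U₁d U₂d E Ad hA hsemi hAnn hps1 hU1 hps2 hU2 hE0 hEsum hU1d hU1dV
    hU2d hU2dV hrange hVle
end

section
/- Let A, B ∈ ℝ^{n×n} be semimonotone matrices with R(A) = R(B) and N(A) = N(B). If A ≥ B entrywise, then B† ≥ A†. -/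
open Matrix Polynomial

/-!
If `A` and `B` have the same range and null space, then `A A†` and `B B†` are both the
orthogonal projector onto the common range, and `A† A`, `B† B` both the orthogonal projector onto
the orthogonal complement of the common null space. Hence `B† A A† = B†` and `B† B A† = A†`, so
`B† - A† = B† (A - B) A†`, a product of three entrywise nonnegative matrices.
-/

namespace Matrix

variable {l m n R : Type*} [Fintype m] [Fintype n] [CommRing R]

theorem mul_mul_self_eq_of_ker_le {A : Matrix m n R} {X : Matrix n m R} {B : Matrix l n R}
    (hAXA : A * X * A = A) (hker : LinearMap.ker A.mulVecLin ≤ LinearMap.ker B.mulVecLin) :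
    B * (X * A) = B := by
  refine ext_iff_mulVec.mpr fun v => ?_
  have hv : (X * A) *ᵥ v - v ∈ LinearMap.ker A.mulVecLin := by
    simp [mulVec_sub, mulVec_mulVec, ← Matrix.mul_assoc, hAXA]
  have hBv : B *ᵥ ((X * A) *ᵥ v - v) = 0 := hker hv
  rwa [mulVec_sub, sub_eq_zero, mulVec_mulVec] at hBv

theorem self_mul_mul_eq_of_range_le {A : Matrix m n R} {X : Matrix n m R} {B : Matrix m l R}
    [Fintype l] (hAXA : A * X * A = A)
    (hrange : LinearMap.range B.mulVecLin ≤ LinearMap.range A.mulVecLin) :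
    A * X * B = B := by
  refine ext_iff_mulVec.mpr fun v => ?_
  obtain ⟨w, hw⟩ := hrange ⟨v, rfl⟩
  change A *ᵥ w = B *ᵥ v at hw
  rw [← mulVec_mulVec, ← hw, mulVec_mulVec, hAXA]

theorem IsSymm.eq_of_mul_eq_left {P Q : Matrix n n R} (hP : P.IsSymm) (hQ : Q.IsSymm)
    (hPQ : P * Q = P) (hQP : Q * P = Q) : P = Q :=
  calc P = P * Q := hPQ.symm
    _ = (Q * P)ᵀ := by rw [transpose_mul, hP.eq, hQ.eq]
    _ = Q := by rw [hQP, hQ.eq]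

theorem IsSymm.eq_of_mul_eq_right {P Q : Matrix n n R} (hP : P.IsSymm) (hQ : Q.IsSymm)
    (hPQ : P * Q = Q) (hQP : Q * P = P) : P = Q :=
  calc P = Q * P := hQP.symm
    _ = (P * Q)ᵀ := by rw [transpose_mul, hP.eq, hQ.eq]
    _ = Q := by rw [hPQ, hQ.eq]

end Matrix

theorem EntryNonneg.mul_s19 {m n k : ℕ} {M : Matrix (Fin m) (Fin n) ℝ}
    {N : Matrix (Fin n) (Fin k) ℝ} (hM : EntryNonneg M) (hN : EntryNonneg N) :
    EntryNonneg (M * N) := fun i j => by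
  rw [mul_apply]
  exact Finset.sum_nonneg fun l _ => mul_nonneg (hM i l) (hN l j)

theorem entryNonneg_sub_iff {m n : ℕ} {M N : Matrix (Fin m) (Fin n) ℝ} :
    EntryNonneg (M - N) ↔ EntryLE N M :=
  forall₂_congr fun _ _ => sub_nonneg

namespace IsMP

variable {m n : ℕ} {A B : Matrix (Fin m) (Fin n) ℝ} {Ad Bd : Matrix (Fin n) (Fin m) ℝ}

theorem mul_self_eq_of_ker_eq (hA : IsMP A Ad) (hB : IsMP B Bd)
    (hN : LinearMap.ker A.mulVecLin = LinearMap.ker B.mulVecLin) : Ad * A = Bd * B :=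
  IsSymm.eq_of_mul_eq_left hA.2.2.2 hB.2.2.2
    (by rw [Matrix.mul_assoc, mul_mul_self_eq_of_ker_le hB.1 hN.ge])
    (by rw [Matrix.mul_assoc, mul_mul_self_eq_of_ker_le hA.1 hN.le])

theorem self_mul_eq_of_range_eq (hA : IsMP A Ad) (hB : IsMP B Bd)
    (hR : LinearMap.range A.mulVecLin = LinearMap.range B.mulVecLin) : A * Ad = B * Bd :=
  IsSymm.eq_of_mul_eq_right hA.2.2.1 hB.2.2.1
    (by rw [← Matrix.mul_assoc, self_mul_mul_eq_of_range_le hA.1 hR.ge])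
    (by rw [← Matrix.mul_assoc, self_mul_mul_eq_of_range_le hB.1 hR.le])

theorem sub_eq_mul_sub_mul (hA : IsMP A Ad) (hB : IsMP B Bd)
    (hR : LinearMap.range A.mulVecLin = LinearMap.range B.mulVecLin)
    (hN : LinearMap.ker A.mulVecLin = LinearMap.ker B.mulVecLin) :
    Bd - Ad = Bd * (A - B) * Ad := by
  have hBdAAd : Bd * A * Ad = Bd := by
    rw [Matrix.mul_assoc, hA.self_mul_eq_of_range_eq hB hR, ← Matrix.mul_assoc, hB.2.1]
  have hBdBAd : Bd * B * Ad = Ad := by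
    rw [← hA.mul_self_eq_of_ker_eq hB hN, hA.2.1]
  rw [Matrix.mul_sub, Matrix.sub_mul, hBdAAd, hBdBAd]

end IsMP

theorem stmt19 {n : ℕ} (A B : Matrix (Fin n) (Fin n) ℝ)
    (Ad Bd : Matrix (Fin n) (Fin n) ℝ)
    (hA : IsMP A Ad) (hB : IsMP B Bd)
    (hAd : EntryNonneg Ad) (hBd : EntryNonneg Bd)
    (hR : LinearMap.range A.mulVecLin = LinearMap.range B.mulVecLin)
    (hN : LinearMap.ker A.mulVecLin = LinearMap.ker B.mulVecLin)
    (hAB : EntryLE B A) :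
    EntryLE Ad Bd := by
  rw [← entryNonneg_sub_iff, hA.sub_eq_mul_sub_mul hB hR hN]
  exact (hBd.mul_s19 (entryNonneg_sub_iff.mpr hAB)).mul_s19 hAd
end
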